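/- arXiv:2604.12157 — 2 statements merged into one kernel-verified Lean document; each statement's English description precedes it below -/
import Mathlib

section
/- Bit-extraction correctness of the disentangling square wave: Let n ≥ 1 and 1 ≤ j ≤ n be natural numbers and let x be a natural number with x < 2^n. Let b = (x / 2^(n−j)) mod 2 be the j-th most significant bit of x (natural-number division). Then cos(π·2^(−(n−j))·(x − 2^(n−j)/2 + 1/2)) is strictly positive if b = 0 and strictly negative if b = 1. Equivalently, with Θ the Heaviside step function (Θ(y) = 1 if y > 0, Θ(y) = 0 if y < 0), one has Θ(cos(π·2^(−(n−j))·(x − 2^(n−j)/2 + 1/2))) = 1 − b. -/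
/-- Bit-extraction correctness of the disentangling square wave: for `1 ≤ j ≤ n` and
`x < 2^n`, with `b = (x / 2^(n−j)) % 2` the j-th most significant bit of `x`, the cosine
`cos(π·2^(−(n−j))·(x − 2^(n−j)/2 + 1/2))` is strictly positive if `b = 0` and strictly
negative if `b = 1`; equivalently, the Heaviside step function of this cosine equals
`1 − b`. All powers of 2 in the cosine argument are real powers. -/
theorem square_wave_bit_extraction
    (n j : ℕ) (hj1 : 1 ≤ j) (hjn : j ≤ n) (x : ℕ) (hx : x < 2 ^ n)
    (b : ℕ) (hb : b = (x / 2 ^ (n - j)) % 2) :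
    (b = 0 → 0 < Real.cos (Real.pi * (2 : ℝ) ^ (-((n : ℝ) - (j : ℝ))) *
        ((x : ℝ) - (2 : ℝ) ^ ((n : ℝ) - (j : ℝ)) / 2 + 1 / 2))) ∧
    (b = 1 → Real.cos (Real.pi * (2 : ℝ) ^ (-((n : ℝ) - (j : ℝ))) *
        ((x : ℝ) - (2 : ℝ) ^ ((n : ℝ) - (j : ℝ)) / 2 + 1 / 2)) < 0) ∧
    ((if 0 < Real.cos (Real.pi * (2 : ℝ) ^ (-((n : ℝ) - (j : ℝ))) *
        ((x : ℝ) - (2 : ℝ) ^ ((n : ℝ) - (j : ℝ)) / 2 + 1 / 2)) then (1 : ℝ) else 0)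
      = 1 - (b : ℝ)) := by
  set m := n - j with hm
  have hcast : (n : ℝ) - (j : ℝ) = (m : ℝ) := by
    rw [hm, Nat.cast_sub hjn]
  have h2m : (0 : ℝ) < (2 : ℝ) ^ m := by positivity
  have hrp : (2 : ℝ) ^ ((n : ℝ) - (j : ℝ)) = (2 : ℝ) ^ m := by
    rw [hcast, Real.rpow_natCast]
  have hrpn : (2 : ℝ) ^ (-((n : ℝ) - (j : ℝ))) = ((2 : ℝ) ^ m)⁻¹ := by
    rw [hcast, Real.rpow_neg (by norm_num), Real.rpow_natCast]
  set q := x / 2 ^ m with hq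
  set r := x % 2 ^ m with hr
  have hxqr : (x : ℝ) = (q : ℝ) * (2 : ℝ) ^ m + (r : ℝ) := by
    have h : 2 ^ m * q + r = x := Nat.div_add_mod x (2 ^ m)
    rw [← h]
    push_cast
    ring
  have hrlt : (r : ℝ) + 1 ≤ (2 : ℝ) ^ m := by
    have : r + 1 ≤ 2 ^ m := Nat.mod_lt _ (Nat.pow_pos (by norm_num))
    exact_mod_cast this
  set u : ℝ := ((r : ℝ) + 1 / 2) / (2 : ℝ) ^ m - 1 / 2 with hu
  have harg : Real.pi * (2 : ℝ) ^ (-((n : ℝ) - (j : ℝ))) *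
      ((x : ℝ) - (2 : ℝ) ^ ((n : ℝ) - (j : ℝ)) / 2 + 1 / 2)
      = Real.pi * u + (q : ℝ) * Real.pi := by
    rw [hrpn, hrp, hxqr, hu]
    field_simp
    ring
  have hcos : Real.cos (Real.pi * (2 : ℝ) ^ (-((n : ℝ) - (j : ℝ))) *
      ((x : ℝ) - (2 : ℝ) ^ ((n : ℝ) - (j : ℝ)) / 2 + 1 / 2))
      = (-1 : ℝ) ^ q * Real.cos (Real.pi * u) := by
    rw [harg, Real.cos_add_nat_mul_pi]
  have hupos : -(1 / 2 : ℝ) < u ∧ u < 1 / 2 := by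
    constructor
    · have : (0 : ℝ) < ((r : ℝ) + 1 / 2) / (2 : ℝ) ^ m := by positivity
      simp only [hu]; linarith
    · have : ((r : ℝ) + 1 / 2) / (2 : ℝ) ^ m < 1 := by
        rw [div_lt_one h2m]; linarith
      simp only [hu]; linarith
  have hcospos : 0 < Real.cos (Real.pi * u) := by
    apply Real.cos_pos_of_mem_Ioo
    constructor
    · have := hupos.1
      nlinarith [Real.pi_pos]
    · have := hupos.2
      nlinarith [Real.pi_pos]
  have hbq : b = q % 2 := hb
  rcases Nat.even_or_odd q with he | ho
  · have hb0 : b = 0 := by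
      rw [hbq, Nat.even_iff.mp he]
    have hpos : 0 < Real.cos (Real.pi * (2 : ℝ) ^ (-((n : ℝ) - (j : ℝ))) *
        ((x : ℝ) - (2 : ℝ) ^ ((n : ℝ) - (j : ℝ)) / 2 + 1 / 2)) := by
      rw [hcos, he.neg_one_pow, one_mul]; exact hcospos
    refine ⟨fun _ => hpos, fun h1 => by simp [hb0] at h1, ?_⟩
    rw [if_pos hpos, hb0]; norm_num
  · have hb1 : b = 1 := by
      rw [hbq, Nat.odd_iff.mp ho]
    have hneg : Real.cos (Real.pi * (2 : ℝ) ^ (-((n : ℝ) - (j : ℝ))) *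
        ((x : ℝ) - (2 : ℝ) ^ ((n : ℝ) - (j : ℝ)) / 2 + 1 / 2)) < 0 := by
      rw [hcos, ho.neg_one_pow]; nlinarith
    refine ⟨fun h0 => by simp [hb1] at h0, fun _ => hneg, ?_⟩
    rw [if_neg (by linarith), hb1]; norm_num
end

section
/- Square-wave invariance under sub-half-lattice displacements (Section V): Let m be a natural number, let x be an integer, and let δ be a real number with |δ| < 1/2. Then cos(π·2^(−m)·((x + δ) − 2^m/2 + 1/2)) and cos(π·2^(−m)·(x − 2^m/2 + 1/2)) are both nonzero and have the same sign. -/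
private lemma half_int_bound (z : ℤ) : (1:ℝ)/2 ≤ |(z:ℝ) + 1/2| := by
  rcases le_or_gt 0 z with h | h
  · have : (0:ℝ) ≤ z := by exact_mod_cast h
    rw [abs_of_nonneg (by linarith)]; linarith
  · have hz : z ≤ -1 := by omega
    have : (z:ℝ) ≤ -1 := by exact_mod_cast hz
    rw [abs_of_nonpos (by linarith)]; linarith

private lemma dist_half_lattice (m : ℕ) (x k : ℤ) :
    (1:ℝ)/(2 * 2^m) ≤ |((x:ℝ) + 1/2)/(2^m) - k| := by
  have hN : (0:ℝ) < 2^m := by positivity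
  have h := half_int_bound (x - 2^m * k)
  have hcast : ((x - 2^m * k : ℤ) : ℝ) = (x:ℝ) - 2^m * k := by push_cast; ring
  rw [hcast] at h
  have heq : ((x:ℝ) + 1/2)/(2^m) - k = ((x:ℝ) - 2^m * k + 1/2)/(2^m) := by
    field_simp; ring
  rw [heq, abs_div, abs_of_pos hN]
  calc (1:ℝ)/(2 * 2^m) = (1/2)/(2^m) := by ring
    _ ≤ |(x:ℝ) - 2^m * k + 1/2| / 2^m := by gcongr

/-- Square-wave invariance under sub-half-lattice displacements (Section V): for any
natural number `m`, integer lattice point `x`, and displacement `|δ| < 1/2`, the cosines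
`cos(π·2^(−m)·((x + δ) − 2^m/2 + 1/2))` and `cos(π·2^(−m)·(x − 2^m/2 + 1/2))` are both
nonzero and have the same sign (equivalently, their product is strictly positive). -/
theorem square_wave_displacement_invariance
    (m : ℕ) (x : ℤ) (δ : ℝ) (hδ : |δ| < 1 / 2) :
    0 < Real.cos (Real.pi * (2 : ℝ) ^ (-(m : ℝ)) *
          (((x : ℝ) + δ) - (2 : ℝ) ^ (m : ℝ) / 2 + 1 / 2)) *
        Real.cos (Real.pi * (2 : ℝ) ^ (-(m : ℝ)) *
          ((x : ℝ) - (2 : ℝ) ^ (m : ℝ) / 2 + 1 / 2)) := by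
  have hN : (0:ℝ) < 2^m := by positivity
  have hrp : (2:ℝ) ^ (m:ℝ) = 2^m := by
    rw [Real.rpow_natCast]
  have hrn : (2:ℝ) ^ (-(m:ℝ)) = (2^m)⁻¹ := by
    rw [Real.rpow_neg (by norm_num), hrp]
  set u : ℝ := ((x:ℝ) + 1/2)/(2^m) with hu
  set u' : ℝ := u + δ/(2^m) with hu'
  have harg2 : Real.pi * (2:ℝ)^(-(m:ℝ)) * ((x:ℝ) - (2:ℝ)^(m:ℝ)/2 + 1/2)
      = Real.pi * u - Real.pi/2 := by
    rw [hrn, hrp, hu]; field_simp; ring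
  have harg1 : Real.pi * (2:ℝ)^(-(m:ℝ)) * (((x:ℝ) + δ) - (2:ℝ)^(m:ℝ)/2 + 1/2)
      = Real.pi * u' - Real.pi/2 := by
    rw [hrn, hrp, hu', hu]; field_simp; ring
  rw [harg1, harg2, Real.cos_sub_pi_div_two, Real.cos_sub_pi_div_two]
  set k : ℤ := ⌊u⌋ with hk
  have hk1 : (k:ℝ) ≤ u := Int.floor_le u
  have hk2 : u < k + 1 := Int.lt_floor_add_one u
  have hd1 : (1:ℝ)/(2 * 2^m) ≤ |u - k| := dist_half_lattice m x k
  have hd2 : (1:ℝ)/(2 * 2^m) ≤ |u - ((k:ℝ)+1)| := by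
    have h := dist_half_lattice m x (k+1)
    rw [show ((k+1:ℤ):ℝ) = (k:ℝ)+1 by push_cast; ring] at h
    exact h
  have hlow : (k:ℝ) + 1/(2*2^m) ≤ u := by
    rw [abs_of_nonneg (by linarith)] at hd1; linarith
  have hhigh : u ≤ (k:ℝ) + 1 - 1/(2*2^m) := by
    rw [abs_of_nonpos (by linarith)] at hd2; linarith
  have hδN : |δ/(2^m)| < 1/(2*2^m) := by
    rw [abs_div, abs_of_pos hN, div_lt_div_iff₀ hN (by positivity)]
    calc |δ| * (2*2^m) < (1/2) * (2*2^m) := by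
          apply mul_lt_mul_of_pos_right hδ (by positivity)
      _ = 1 * 2^m := by ring
  have hδN' := abs_lt.mp hδN
  have hu'low : (k:ℝ) < u' := by rw [hu']; linarith [hδN'.1]
  have hu'high : u' < (k:ℝ) + 1 := by rw [hu']; linarith [hδN'.2]
  have hulow : (k:ℝ) < u := by linarith [one_div_pos.mpr (show (0:ℝ) < 2*2^m by positivity)]
  have huhigh : u < (k:ℝ) + 1 := hk2
  have hpi := Real.pi_pos
  have hs : ∀ v : ℝ, (k:ℝ) < v → v < (k:ℝ) + 1 →
      Real.sin (Real.pi * v) = (-1)^k * Real.sin (Real.pi * (v - k)) := by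
    intro v _ _
    rw [show Real.pi * v = Real.pi * (v - k) + k * Real.pi by ring,
      Real.sin_add_int_mul_pi]
  have hspos : ∀ v : ℝ, (k:ℝ) < v → v < (k:ℝ) + 1 →
      0 < Real.sin (Real.pi * (v - k)) := by
    intro v h1 h2
    apply Real.sin_pos_of_pos_of_lt_pi
    · have : (0:ℝ) < v - k := by linarith
      positivity
    · nlinarith
  rw [hs u' hu'low hu'high, hs u hulow huhigh]
  have he : ((-1:ℝ)^k) * ((-1:ℝ)^k) = 1 := by
    rw [← zpow_add₀ (by norm_num : (-1:ℝ) ≠ 0)]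
    rw [show k + k = 2 * k by ring, zpow_mul]
    norm_num
  have h1 := hspos u' hu'low hu'high
  have h2 := hspos u hulow huhigh
  calc (0:ℝ) < Real.sin (Real.pi * (u' - k)) * Real.sin (Real.pi * (u - k)) :=
        mul_pos h1 h2
    _ = (-1)^k * Real.sin (Real.pi * (u' - k)) * ((-1)^k * Real.sin (Real.pi * (u - k))) := by
        rw [show ∀ e a b : ℝ, e * a * (e * b) = (e*e) * (a*b) from fun e a b => by ring, he, one_mul]
end
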